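/- arXiv:2410.13913 — 2 statements merged into one kernel-verified Lean document; each statement's English description precedes it below -/
import Mathlib

section
/- For any real numbers α, β ∈ ℝ, any n ≥ 4, any x ∈ ℝ^n, and any k with 3 ≤ k ≤ n−1, we have S_k(x)^2 ≥ S_{k-1}(x) S_{k+1}(x), where S_k(x) = E_k(x) + (α+β)E_{k-1}(x) + αβ E_{k-2}(x). -/
/-!
Let `P(t) = ∏ᵢ (t + xᵢ)`. For a polynomial `p` of degree `≤ m` call `e_j = p_j / C(m, j)` its
normalized coefficients; those of `P` (with `m = n`) are `E_{n-j}(x)`. The polar derivative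
`m p + (z - t) p'` of a real-rooted `p` is real-rooted of degree `≤ m - 1` (moving the pole to `0`,
it is the reflection of the derivative of the reflection of `p`), and its normalized coefficients
are `m (e_j + z e_{j+1})`. Applying it to `P` with poles `α` and then `β` gives a real-rooted
polynomial with normalized coefficients `n (n - 1) S_{n-j}(x)`, so the claim is Newton's inequality
`e_j e_{j+2} ≤ e_{j+1}²` for that polynomial.

Newton's inequality reduces, by differentiating (which preserves real-rootedness by Rolle and
shifts the normalized coefficients), to `e_0 e_2 ≤ e_1²`, proved by splitting off one root at a
time.
-/

/-- The k-th elementary symmetric polynomial of `x : Fin n → ℝ`, with the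
conventions `σ_0 = 1` and `σ_k = 0` for `k < 0` or `k > n`. -/
noncomputable def esymm (n : ℕ) (x : Fin n → ℝ) (k : ℤ) : ℝ :=
  if 0 ≤ k then ∑ s ∈ (Finset.univ : Finset (Fin n)).powersetCard k.toNat, ∏ i ∈ s, x i else 0

/-- The normalized elementary symmetric mean `E_k(x) = σ_k(x) / C(n,k)`. -/
noncomputable def Esymm (n : ℕ) (x : Fin n → ℝ) (k : ℤ) : ℝ :=
  esymm n x k / (n.choose k.toNat)


/-- `S_k(x) = E_k(x) + (α+β) E_{k-1}(x) + αβ E_{k-2}(x)`. -/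
noncomputable def S (n : ℕ) (α β : ℝ) (x : Fin n → ℝ) (k : ℤ) : ℝ :=
  Esymm n x k + (α + β) * Esymm n x (k - 1) + α * β * Esymm n x (k - 2)

namespace Nat

variable {K : Type*} [Field K] [CharZero K]

theorem cast_add_one_div_choose {m j : ℕ} (hj : j ≤ m) :
    ((j : K) + 1) / m.choose j = (m + 1) / (m + 1).choose (j + 1) := by
  have key : ((m + 1 : ℕ) * m.choose j : K) = (m + 1).choose (j + 1) * (j + 1 : ℕ) := by
    exact_mod_cast Nat.add_one_mul_choose_eq m j
  push_cast at key
  rw [div_eq_div_iff (Nat.cast_ne_zero.mpr (Nat.choose_pos hj).ne')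
    (Nat.cast_ne_zero.mpr (Nat.choose_pos (by omega)).ne')]
  linear_combination -key

theorem cast_add_one_sub_div_choose {m j : ℕ} (hj : j ≤ m) :
    ((m : K) + 1 - j) / m.choose j = (m + 1) / (m + 1).choose j := by
  have key : (m.choose j * (m + 1 : ℕ) : K) = (m + 1).choose j * (m + 1 - j : ℕ) := by
    exact_mod_cast Nat.choose_mul_succ_eq m j
  rw [Nat.cast_sub (by omega)] at key
  push_cast at key
  rw [div_eq_div_iff (Nat.cast_ne_zero.mpr (Nat.choose_pos hj).ne')
    (Nat.cast_ne_zero.mpr (Nat.choose_pos (by omega)).ne')]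
  linear_combination -key

end Nat

namespace Polynomial

section CommRing

variable {R : Type*} [CommRing R]

/-- The polar derivative of `p`, regarded as a polynomial of degree `≤ m`, with respect to the
pole `z`. -/
noncomputable def polarDeriv (m : ℕ) (z : R) (p : R[X]) : R[X] :=
  C (m : R) * p + (C z - X) * derivative p

theorem coeff_X_mul_derivative (p : R[X]) (j : ℕ) :
    (X * derivative p).coeff j = j * p.coeff j := by
  cases j with
  | zero => simp
  | succ i => rw [coeff_X_mul, coeff_derivative]; push_cast; ring

theorem coeff_polarDeriv (m : ℕ) (z : R) (p : R[X]) (j : ℕ) :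
    (polarDeriv m z p).coeff j = (m - j) * p.coeff j + z * (j + 1) * p.coeff (j + 1) := by
  rw [polarDeriv, sub_mul, coeff_add, coeff_sub, coeff_C_mul, coeff_C_mul,
    coeff_X_mul_derivative, coeff_derivative]
  ring

theorem natDegree_polarDeriv_le {m : ℕ} (z : R) {p : R[X]} (hp : p.natDegree ≤ m + 1) :
    (polarDeriv (m + 1) z p).natDegree ≤ m := by
  refine natDegree_le_iff_coeff_eq_zero.mpr fun j hj => ?_
  rw [coeff_polarDeriv, coeff_eq_zero_of_natDegree_lt (by omega : p.natDegree < j + 1)]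
  rcases Nat.lt_or_ge (m + 1) j with hj' | hj'
  · rw [coeff_eq_zero_of_natDegree_lt (by omega : p.natDegree < j)]; ring
  · obtain rfl : j = m + 1 := by omega
    simp

theorem polarDeriv_comp_X_add_C (m : ℕ) (z w : R) (p : R[X]) :
    (polarDeriv m z p).comp (X + C w) = polarDeriv m (z - w) (p.comp (X + C w)) := by
  simp only [polarDeriv, add_comp, mul_comp, sub_comp, C_comp, X_comp, derivative_comp,
    derivative_X_add_C, map_sub]
  ring

theorem natDegree_derivative_reflect_le {m : ℕ} {q : R[X]} (hq : q.natDegree ≤ m + 1) :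
    (derivative (reflect (m + 1) q)).natDegree ≤ m :=
  (natDegree_derivative_le _).trans
    (Nat.sub_le_of_le_add (natDegree_reflect_le.trans (max_le le_rfl hq)))

theorem polarDeriv_zero_eq_reflect_derivative_reflect {m : ℕ} {q : R[X]}
    (hq : q.natDegree ≤ m + 1) :
    polarDeriv (m + 1) 0 q = reflect m (derivative (reflect (m + 1) q)) := by
  ext j
  rw [coeff_polarDeriv, coeff_reflect]
  rcases le_or_gt j m with hj | hj
  · rw [revAt_le hj, coeff_derivative, coeff_reflect, revAt_le (by omega : m - j + 1 ≤ m + 1),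
      show m + 1 - (m - j + 1) = j by omega, Nat.cast_add, Nat.cast_sub hj]
    ring
  · rw [revAt_eq_self_of_lt hj,
      coeff_eq_zero_of_natDegree_lt ((natDegree_derivative_reflect_le hq).trans_lt hj)]
    rcases Nat.lt_or_ge (m + 1) j with hj' | hj'
    · rw [coeff_eq_zero_of_natDegree_lt (by omega : q.natDegree < j)]; ring
    · obtain rfl : j = m + 1 := by omega
      simp

end CommRing

section Field

variable {K : Type*} [Field K]

theorem Splits.reverse {p : K[X]} (hp : p.Splits) : p.reverse.Splits := by
  induction hp using Submonoid.closure_induction with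
  | mem g hg =>
    refine Splits.of_natDegree_le_one ((reverse_natDegree_le g).trans ?_)
    rcases hg with ⟨a, rfl⟩ | ⟨a, rfl⟩
    · simp
    · exact (natDegree_X_add_C a).le
  | one => rw [← map_one C, reverse_C]; exact Splits.C 1
  | mul f g _ _ hf hg => rw [reverse_mul_of_domain]; exact hf.mul hg

theorem reflect_eq_reverse_mul_X_pow {p : K[X]} {N : ℕ} (hN : p.natDegree ≤ N) :
    p.reflect N = p.reverse * X ^ (N - p.natDegree) := by
  have := reflect_mul p 1 le_rfl (natDegree_one.trans_le (Nat.zero_le (N - p.natDegree)))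
  rwa [mul_one, Nat.add_sub_cancel' hN, reflect_one] at this

theorem Splits.reflect {p : K[X]} (hp : p.Splits) {N : ℕ} (hN : p.natDegree ≤ N) :
    (p.reflect N).Splits := by
  rw [reflect_eq_reverse_mul_X_pow hN]
  exact hp.reverse.mul (Splits.X_pow _)

end Field

theorem Splits.derivative {p : ℝ[X]} (hp : p.Splits) : p.derivative.Splits := by
  rw [splits_iff_card_roots] at hp ⊢
  have := card_roots_le_derivative p
  have := card_roots' p.derivative
  have := natDegree_derivative_le p
  omega

theorem Splits.polarDeriv {p : ℝ[X]} (hp : p.Splits) {m : ℕ} (hm : p.natDegree ≤ m + 1)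
    (z : ℝ) : (polarDeriv (m + 1) z p).Splits := by
  set q := p.comp (X + C z)
  have hq : q.natDegree ≤ m + 1 := by simpa [q, natDegree_comp] using hm
  have hq₀ : (Polynomial.polarDeriv (m + 1) 0 q).Splits := by
    rw [polarDeriv_zero_eq_reflect_derivative_reflect hq]
    exact ((hp.comp_X_add_C z).reflect hq).derivative.reflect (natDegree_derivative_reflect_le hq)
  rwa [splits_iff_comp_splits_of_natDegree_eq_one (natDegree_X_add_C z), polarDeriv_comp_X_add_C,
    sub_self]

section NormCoeff

variable {K : Type*} [Field K]

noncomputable def normCoeff (m : ℕ) (p : K[X]) (j : ℕ) : K := p.coeff j / m.choose j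

variable [CharZero K]

theorem normCoeff_derivative (m : ℕ) (p : K[X]) (j : ℕ) :
    normCoeff m (derivative p) j = (m + 1) * normCoeff (m + 1) p (j + 1) := by
  rw [normCoeff, normCoeff, coeff_derivative]
  rcases le_or_gt j m with hj | hj
  · rw [mul_div_assoc, Nat.cast_add_one_div_choose hj]
    ring
  · simp [Nat.choose_eq_zero_of_lt hj, Nat.choose_eq_zero_of_lt (by omega : m + 1 < j + 1)]

theorem normCoeff_polarDeriv {m j : ℕ} (hj : j ≤ m) (z : K) (p : K[X]) :
    normCoeff m (polarDeriv (m + 1) z p) j =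
      (m + 1) * (normCoeff (m + 1) p j + z * normCoeff (m + 1) p (j + 1)) := by
  rw [normCoeff, normCoeff, normCoeff, coeff_polarDeriv]
  push_cast
  calc ((m + 1 - j) * p.coeff j + z * (j + 1) * p.coeff (j + 1)) / m.choose j
      = ((m + 1 - j) / m.choose j) * p.coeff j
          + ((j + 1) / m.choose j) * (z * p.coeff (j + 1)) := by ring
    _ = _ := by rw [Nat.cast_add_one_sub_div_choose hj, Nat.cast_add_one_div_choose hj]; ring

theorem normCoeff_polarDeriv_polarDeriv {m j : ℕ} (hj : j ≤ m) (α β : K) (p : K[X]) :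
    normCoeff m (polarDeriv (m + 1) β (polarDeriv (m + 2) α p)) j =
      (m + 1) * (m + 2) * (normCoeff (m + 2) p j + (α + β) * normCoeff (m + 2) p (j + 1)
        + α * β * normCoeff (m + 2) p (j + 2)) := by
  rw [normCoeff_polarDeriv hj, normCoeff_polarDeriv (m := m + 1) (by omega),
    normCoeff_polarDeriv (m := m + 1) (by omega)]
  push_cast
  ring

end NormCoeff

theorem two_mul_coeff_zero_mul_coeff_two_le_X_sub_C_mul {q : ℝ[X]} {m : ℕ} (hm : 1 ≤ m)
    (hq : 2 * m * (q.coeff 0 * q.coeff 2) ≤ (m - 1) * q.coeff 1 ^ 2) (r : ℝ) :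
    2 * (m + 1 : ℝ) * (((X - C r) * q).coeff 0 * ((X - C r) * q).coeff 2)
      ≤ m * ((X - C r) * q).coeff 1 ^ 2 := by
  have h₀ : ((X - C r) * q).coeff 0 = -r * q.coeff 0 := by simp [sub_mul]
  have h₁ : ((X - C r) * q).coeff 1 = q.coeff 0 - r * q.coeff 1 := by
    rw [sub_mul, coeff_sub, coeff_X_mul, coeff_C_mul]
  have h₂ : ((X - C r) * q).coeff 2 = q.coeff 1 - r * q.coeff 2 := by
    rw [sub_mul, coeff_sub, coeff_X_mul, coeff_C_mul]
  rw [h₀, h₁, h₂]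
  have hm₁ : (1 : ℝ) ≤ m := by exact_mod_cast hm
  have key : (m : ℝ) * (m * (q.coeff 0 - r * q.coeff 1) ^ 2
        - 2 * (m + 1) * (-r * q.coeff 0 * (q.coeff 1 - r * q.coeff 2)))
      = (m * q.coeff 0 + r * q.coeff 1) ^ 2
        + r ^ 2 * (m + 1) * ((m - 1) * q.coeff 1 ^ 2 - 2 * m * (q.coeff 0 * q.coeff 2)) := by
    ring
  have : 0 ≤ r ^ 2 * (m + 1) * ((m - 1) * q.coeff 1 ^ 2 - 2 * m * (q.coeff 0 * q.coeff 2)) :=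
    mul_nonneg (by positivity) (by linarith)
  nlinarith [sq_nonneg ((m : ℝ) * q.coeff 0 + r * q.coeff 1)]

theorem Splits.two_mul_coeff_zero_mul_coeff_two_le {p : ℝ[X]} (hp : p.Splits) {m : ℕ}
    (hm : p.natDegree ≤ m) : 2 * m * (p.coeff 0 * p.coeff 2) ≤ (m - 1) * p.coeff 1 ^ 2 := by
  suffices h : ∀ (s : Multiset ℝ) (N : ℕ), Multiset.card s ≤ N →
      2 * (N : ℝ) * ((s.map (X - C ·)).prod.coeff 0 * (s.map (X - C ·)).prod.coeff 2)
        ≤ ((N : ℝ) - 1) * (s.map (X - C ·)).prod.coeff 1 ^ 2 by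
    have := h p.roots m (hp.natDegree_eq_card_roots ▸ hm)
    rw [hp.eq_prod_roots]
    simp only [coeff_C_mul]
    nlinarith [sq_nonneg p.leadingCoeff]
  intro s
  induction s using Multiset.induction_on with
  | empty => simp [coeff_one]
  | cons r s ih =>
    intro N hN
    obtain ⟨N, rfl⟩ : ∃ N', N = N' + 1 := ⟨N - 1, by simp at hN; omega⟩
    rw [Multiset.card_cons, add_le_add_iff_right] at hN
    rcases Nat.eq_zero_or_pos N with rfl | hN₀
    · obtain rfl := Multiset.card_eq_zero.mp (Nat.le_zero.mp hN)
      simp [coeff_X]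
    · simpa using two_mul_coeff_zero_mul_coeff_two_le_X_sub_C_mul hN₀ (ih N hN) r

theorem Splits.normCoeff_zero_mul_normCoeff_two_le {p : ℝ[X]} (hp : p.Splits) {m : ℕ}
    (hm : p.natDegree ≤ m) : normCoeff m p 0 * normCoeff m p 2 ≤ normCoeff m p 1 ^ 2 := by
  rcases lt_or_ge m 2 with hm₂ | hm₂
  · simp [normCoeff, Nat.choose_eq_zero_of_lt hm₂, sq_nonneg]
  have h := hp.two_mul_coeff_zero_mul_coeff_two_le hm
  have hm₂' : (2 : ℝ) ≤ m := by exact_mod_cast hm₂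
  simp only [normCoeff, Nat.choose_zero_right, Nat.choose_one_right, Nat.cast_choose_two,
    Nat.cast_one, div_one, div_pow]
  rw [mul_div_assoc', div_le_div_iff₀ (by nlinarith) (by positivity)]
  nlinarith

/-- Newton's inequality. -/
theorem Splits.normCoeff_mul_le_sq {p : ℝ[X]} (hp : p.Splits) {m : ℕ} (hm : p.natDegree ≤ m)
    (j : ℕ) : normCoeff m p j * normCoeff m p (j + 2) ≤ normCoeff m p (j + 1) ^ 2 := by
  induction j generalizing m p with
  | zero => exact hp.normCoeff_zero_mul_normCoeff_two_le hm
  | succ j ih =>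
    cases m with
    | zero => simp [normCoeff]
    | succ m =>
      have h := ih hp.derivative ((natDegree_derivative_le p).trans (Nat.sub_le_of_le_add hm))
      simp only [normCoeff_derivative, mul_pow] at h
      have hm₀ : (0 : ℝ) < ((m : ℝ) + 1) ^ 2 := by positivity
      nlinarith

end Polynomial

open Polynomial

theorem coeff_prod_X_add_C_sub {n k : ℕ} (hk : k ≤ n) (x : Fin n → ℝ) :
    (∏ i, (X + C (x i))).coeff (n - k) = esymm n x k := by
  rw [Finset.prod_X_add_C_coeff _ _ (by simp), esymm, if_pos (Int.natCast_nonneg k),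
    Int.toNat_natCast, Finset.card_univ, Fintype.card_fin, Nat.sub_sub_self hk]

theorem normCoeff_prod_X_add_C_sub {n k : ℕ} (hk : k ≤ n) (x : Fin n → ℝ) :
    normCoeff n (∏ i, (X + C (x i))) (n - k) = Esymm n x k := by
  rw [normCoeff, coeff_prod_X_add_C_sub hk, Nat.choose_symm hk, Esymm, Int.toNat_natCast]

theorem S_eq_normCoeff_prod_X_add_C {n k : ℕ} (hk₂ : 2 ≤ k) (hkn : k ≤ n) (α β : ℝ)
    (x : Fin n → ℝ) :
    S n α β x k = normCoeff n (∏ i, (X + C (x i))) (n - k)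
      + (α + β) * normCoeff n (∏ i, (X + C (x i))) (n - k + 1)
      + α * β * normCoeff n (∏ i, (X + C (x i))) (n - k + 2) := by
  rw [show n - k + 1 = n - (k - 1) by omega, show n - k + 2 = n - (k - 2) by omega,
    normCoeff_prod_X_add_C_sub hkn, normCoeff_prod_X_add_C_sub (by omega),
    normCoeff_prod_X_add_C_sub (by omega), S, Nat.cast_sub (by omega), Nat.cast_sub hk₂]
  norm_num

theorem S_newton_general_general (n k : ℕ) (α β : ℝ) (x : Fin n → ℝ)
    (hk1 : 3 ≤ k) (hk2 : k ≤ n - 1) :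
    S n α β x k ^ 2 ≥ S n α β x ((k : ℤ) - 1) * S n α β x ((k : ℤ) + 1) := by
  obtain ⟨m, rfl⟩ : ∃ m, n = m + 2 := ⟨n - 2, by omega⟩
  set P : ℝ[X] := ∏ i, (X + C (x i))
  have hP : P.Splits := Splits.prod fun i _ => Splits.X_add_C (x i)
  have hPdeg : P.natDegree ≤ m + 2 := (natDegree_prod_le _ _).trans (by simp)
  set Q := polarDeriv (m + 1) β (polarDeriv (m + 2) α P)
  have hQ : Q.Splits := (hP.polarDeriv hPdeg α).polarDeriv (natDegree_polarDeriv_le α hPdeg) β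
  have hQdeg : Q.natDegree ≤ m := natDegree_polarDeriv_le β (natDegree_polarDeriv_le α hPdeg)
  have hS : ∀ i, 2 ≤ i → i ≤ m + 2 →
      normCoeff m Q (m + 2 - i) = (m + 1) * (m + 2) * S (m + 2) α β x i := fun i hi₂ hi => by
    rw [normCoeff_polarDeriv_polarDeriv (by omega), S_eq_normCoeff_prod_X_add_C hi₂ hi]
  have h := hQ.normCoeff_mul_le_sq hQdeg (m + 2 - (k + 1))
  rw [show m + 2 - (k + 1) + 1 = m + 2 - k by omega,
    show m + 2 - (k + 1) + 2 = m + 2 - (k - 1) by omega,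
    hS (k + 1) (by omega) (by omega), hS k (by omega) (by omega),
    hS (k - 1) (by omega) (by omega)] at h
  rw [show (k : ℤ) - 1 = ((k - 1 : ℕ) : ℤ) by omega, show (k : ℤ) + 1 = ((k + 1 : ℕ) : ℤ) by simp,
    ge_iff_le, ← mul_le_mul_iff_right₀ (by positivity : (0 : ℝ) < (((m : ℝ) + 1) * (m + 2)) ^ 2)]
  linear_combination h

theorem S_newton_general (n k : ℕ) (α β : ℝ) (x : Fin n → ℝ)
    (hn : 4 ≤ n) (hk1 : 3 ≤ k) (hk2 : k ≤ n - 1) :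
    S n α β x k ^ 2 ≥ S n α β x ((k : ℤ) - 1) * S n α β x ((k : ℤ) + 1) :=
  S_newton_general_general n k α β x hk1 hk2
end

section
/- Let α, β ≥ 0 and x ∈ ℝ^n with E_1(x) ≥ 0 and E_2(x) ≥ 0. Then S_2(x)^2 − S_1(x)S_3(x) ≥ αβE_1(x)^2 + α²β² + αβ(α+β)E_1(x) ≥ 0, where S_k(x) = E_k(x) + (α+β)E_{k-1}(x) + αβE_{k-2}(x). -/
/-! Expanding the definitions,
`S₂² - S₁S₃ - (αβE₁² + α²β² + αβ(α+β)E₁) = (E₂² - E₁E₃) + (α²+β²)(E₁² - E₂) + (α+β)(E₁E₂ - E₃)`,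
and each bracket is nonnegative by Newton's inequalities: `E₃ ≤ E₁E₂` follows from
`E₁E₃ ≤ E₂² ≤ E₁²E₂` when `E₁ > 0`, while `E₁ = 0 ≤ E₂` forces `x = 0`.
In terms of the power sums `pₖ`, Newton's inequality `E₁E₃ ≤ E₂²` reads
`(n-1)p₁(p₁³ - 3p₁p₂ + 2p₃) ≤ (n-2)(p₁² - p₂)²`, and twice the difference is the sum of squares
`∑ᵢⱼ (xᵢ - xⱼ)²((p₁ - xᵢ - xⱼ)² + (p₂ - xᵢ² - xⱼ²))`. -/

open Finset

namespace MvPolynomial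

variable (σ R : Type*) [Fintype σ] [CommRing R]

theorem two_mul_esymm_two : 2 * esymm σ R 2 = psum σ R 1 ^ 2 - psum σ R 2 := by
  have h := mul_esymm_eq_sum σ R 2
  rw [sum_filter, Nat.sum_antidiagonal_eq_sum_range_succ_mk] at h
  simp only [sum_range_succ, sum_range_zero, Nat.reduceSub, Nat.reduceLT, ↓reduceIte, esymm_zero,
    esymm_one, ← psum_one] at h
  linear_combination h

theorem six_mul_esymm_three :
    6 * esymm σ R 3 = psum σ R 1 ^ 3 - 3 * psum σ R 1 * psum σ R 2 + 2 * psum σ R 3 := by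
  have h := mul_esymm_eq_sum σ R 3
  rw [sum_filter, Nat.sum_antidiagonal_eq_sum_range_succ_mk] at h
  simp only [sum_range_succ, sum_range_zero, Nat.reduceSub, Nat.reduceLT, ↓reduceIte, esymm_zero,
    esymm_one, ← psum_one] at h
  linear_combination 2 * h + psum σ R 1 * two_mul_esymm_two σ R

variable {σ R}

theorem eval_psum (x : σ → R) (k : ℕ) : eval x (psum σ R k) = ∑ i, x i ^ k := by
  simp [psum]

end MvPolynomial

theorem sum_sum_sq_sub_mul_eq {ι R : Type*} [Fintype ι] [CommRing R] (x : ι → R) :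
    ∑ i, ∑ j, (x i - x j) ^ 2 *
      ((∑ k, x k - x i - x j) ^ 2 + (∑ k, x k ^ 2 - x i ^ 2 - x j ^ 2)) =
    2 * ((Fintype.card ι - 2) * ((∑ k, x k) ^ 2 - ∑ k, x k ^ 2) ^ 2 -
      (Fintype.card ι - 1) * (∑ k, x k) *
        ((∑ k, x k) ^ 3 - 3 * (∑ k, x k) * ∑ k, x k ^ 2 + 2 * ∑ k, x k ^ 3)) := by
  ring_nf
  simp only [sum_add_distrib, sum_sub_distrib, sum_neg_distrib, ← sum_mul, ← mul_sum, sum_const,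
    card_univ, nsmul_eq_mul]
  ring

theorem newton_psum_le {ι : Type*} [Fintype ι] (x : ι → ℝ) :
    (Fintype.card ι - 1) * (∑ k, x k) *
        ((∑ k, x k) ^ 3 - 3 * (∑ k, x k) * ∑ k, x k ^ 2 + 2 * ∑ k, x k ^ 3) ≤
      (Fintype.card ι - 2) * ((∑ k, x k) ^ 2 - ∑ k, x k ^ 2) ^ 2 := by
  have hsos : 0 ≤ ∑ i, ∑ j, (x i - x j) ^ 2 *
      ((∑ k, x k - x i - x j) ^ 2 + (∑ k, x k ^ 2 - x i ^ 2 - x j ^ 2)) := by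
    refine sum_nonneg fun i _ ↦ sum_nonneg fun j _ ↦ ?_
    obtain rfl | hij := eq_or_ne i j
    · simp
    have : x i ^ 2 + x j ^ 2 ≤ ∑ k, x k ^ 2 := by
      classical
      rw [← sum_pair (f := fun k ↦ x k ^ 2) hij]
      exact sum_le_univ_sum_of_nonneg fun k ↦ sq_nonneg (x k)
    exact mul_nonneg (sq_nonneg _) (add_nonneg (sq_nonneg _) (by linarith))
  linarith [sum_sum_sq_sub_mul_eq x]

section

variable {n : ℕ} (x : Fin n → ℝ)

theorem Esymm_natCast (m : ℕ) :
    Esymm n x m = MvPolynomial.eval x (MvPolynomial.esymm (Fin n) ℝ m) / n.choose m := by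
  simp [Esymm, esymm, MvPolynomial.esymm, map_sum, map_prod]

theorem Esymm_of_neg {k : ℤ} (hk : k < 0) : Esymm n x k = 0 := by
  simp [Esymm, esymm, hk.not_ge]

theorem Esymm_zero : Esymm n x 0 = 1 := by
  simp [Esymm, esymm]

theorem Esymm_one : Esymm n x 1 = (∑ i, x i) / n := by
  simpa [MvPolynomial.esymm_one] using Esymm_natCast x 1

-- Also correct for `n < 2`, where `n.choose 2 = 0` and the division by zero gives `0`.
theorem Esymm_two : Esymm n x 2 = ((∑ i, x i) ^ 2 - ∑ i, x i ^ 2) / (n * (n - 1)) := by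
  have h := congrArg (MvPolynomial.eval x) (MvPolynomial.two_mul_esymm_two (Fin n) ℝ)
  simp only [map_mul, map_sub, map_pow, map_ofNat, MvPolynomial.eval_psum, pow_one] at h
  have := Esymm_natCast x 2
  rw [Nat.cast_ofNat, Nat.cast_choose_two] at this
  rw [this, ← h]
  field_simp

theorem Esymm_three : Esymm n x 3 =
    ((∑ i, x i) ^ 3 - 3 * (∑ i, x i) * ∑ i, x i ^ 2 + 2 * ∑ i, x i ^ 3) /
      (n * (n - 1) * (n - 2)) := by
  have h := congrArg (MvPolynomial.eval x) (MvPolynomial.six_mul_esymm_three (Fin n) ℝ)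
  simp only [map_mul, map_sub, map_add, map_pow, map_ofNat, MvPolynomial.eval_psum,
    pow_one] at h
  have hchoose : (n.choose 3 : ℝ) = n * (n - 1) * (n - 2) / 6 := by
    simp [Nat.cast_choose_eq_descPochhammer_div, descPochhammer_succ_eval, Nat.factorial]
  have := Esymm_natCast x 3
  rw [Nat.cast_ofNat, hchoose] at this
  rw [this, ← h]
  field_simp

theorem Esymm_two_le_sq : Esymm n x 2 ≤ Esymm n x 1 ^ 2 := by
  rw [Esymm_one, Esymm_two]
  obtain hn | hn := lt_or_ge n 2
  · interval_cases n <;> simp [sq_nonneg]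
  have hn : (2 : ℝ) ≤ n := by exact_mod_cast hn
  have hcs : (∑ i, x i) ^ 2 ≤ n * ∑ i, x i ^ 2 := by
    simpa using sq_sum_le_card_mul_sum_sq (s := univ) (f := x)
  rw [div_pow, div_le_div_iff₀ (by nlinarith) (by positivity)]
  nlinarith

theorem Esymm_one_mul_Esymm_three_le_sq : Esymm n x 1 * Esymm n x 3 ≤ Esymm n x 2 ^ 2 := by
  rw [Esymm_one, Esymm_two, Esymm_three]
  obtain hn | hn := lt_or_ge n 3
  · interval_cases n <;> simp [sq_nonneg]
  have hn : (3 : ℝ) ≤ n := by exact_mod_cast hn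
  have hn₀ : (0 : ℝ) < n := by linarith
  have hn₁ : (0 : ℝ) < n - 1 := by linarith
  have hn₂ : (0 : ℝ) < n - 2 := by linarith
  have h := newton_psum_le x
  rw [Fintype.card_fin] at h
  rw [div_mul_div_comm, div_pow, div_le_div_iff₀ (by positivity) (by positivity)]
  nlinarith [mul_nonneg (by positivity : (0 : ℝ) ≤ n ^ 2 * (n - 1)) (sub_nonneg.2 h)]

theorem eq_zero_of_Esymm_one_eq_zero (hn : 2 ≤ n) (hE1 : Esymm n x 1 = 0)
    (hE2 : 0 ≤ Esymm n x 2) : x = 0 := by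
  have hn : (2 : ℝ) ≤ n := by exact_mod_cast hn
  have hp₁ : ∑ i, x i = 0 := by
    rwa [Esymm_one, div_eq_zero_iff, or_iff_left (by positivity)] at hE1
  have hp₂ : ∑ i, x i ^ 2 ≤ 0 := by
    rw [Esymm_two, hp₁, le_div_iff₀ (by nlinarith)] at hE2
    linarith
  have hsq : (fun i ↦ x i ^ 2) = 0 :=
    (Fintype.sum_eq_zero_iff_of_nonneg fun i ↦ sq_nonneg (x i)).1
      (hp₂.antisymm (sum_nonneg fun i _ ↦ sq_nonneg (x i)))
  ext i
  simpa using congrFun hsq i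

theorem Esymm_three_le_Esymm_one_mul_Esymm_two (hE1 : 0 ≤ Esymm n x 1)
    (hE2 : 0 ≤ Esymm n x 2) : Esymm n x 3 ≤ Esymm n x 1 * Esymm n x 2 := by
  obtain hE1 | hE1 := hE1.lt_or_eq
  · refine le_of_mul_le_mul_left ?_ hE1
    calc Esymm n x 1 * Esymm n x 3 ≤ Esymm n x 2 * Esymm n x 2 := by
          rw [← sq]; exact Esymm_one_mul_Esymm_three_le_sq x
      _ ≤ Esymm n x 1 ^ 2 * Esymm n x 2 :=
          mul_le_mul_of_nonneg_right (Esymm_two_le_sq x) hE2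
      _ = Esymm n x 1 * (Esymm n x 1 * Esymm n x 2) := by ring
  rw [← hE1, zero_mul]
  obtain hn | hn := lt_or_ge n 3
  · interval_cases n <;> simp [Esymm_three]
  obtain rfl := eq_zero_of_Esymm_one_eq_zero x (by omega) hE1.symm hE2
  simp [Esymm_three]

end

theorem S_two_sq_sub_S_one_mul_S_three {n : ℕ} (α β : ℝ) (x : Fin n → ℝ) :
    S n α β x 2 ^ 2 - S n α β x 1 * S n α β x 3 =
      (Esymm n x 2 ^ 2 - Esymm n x 1 * Esymm n x 3) +
      (α ^ 2 + β ^ 2) * (Esymm n x 1 ^ 2 - Esymm n x 2) +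
      (α + β) * (Esymm n x 1 * Esymm n x 2 - Esymm n x 3) +
      (α * β * Esymm n x 1 ^ 2 + α ^ 2 * β ^ 2 + α * β * (α + β) * Esymm n x 1) := by
  simp only [S, Int.reduceSub, sub_self, Esymm_zero, Esymm_of_neg x (k := -1) (by norm_num)]
  ring

theorem S2_sq_ge_S1_S3 (n : ℕ) (α β : ℝ) (x : Fin n → ℝ)
    (hα : 0 ≤ α) (hβ : 0 ≤ β) (hE1 : 0 ≤ Esymm n x 1) (hE2 : 0 ≤ Esymm n x 2) :
    S n α β x 2 ^ 2 - S n α β x 1 * S n α β x 3 ≥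
      α * β * Esymm n x 1 ^ 2 + α ^ 2 * β ^ 2 + α * β * (α + β) * Esymm n x 1 ∧
    α * β * Esymm n x 1 ^ 2 + α ^ 2 * β ^ 2 + α * β * (α + β) * Esymm n x 1 ≥ 0 := by
  refine ⟨?_, by positivity⟩
  rw [S_two_sq_sub_S_one_mul_S_three, ge_iff_le, le_add_iff_nonneg_left]
  have newton₁ := sub_nonneg.2 (Esymm_two_le_sq x)
  have newton₂ := sub_nonneg.2 (Esymm_one_mul_Esymm_three_le_sq x)
  have newton₃ := sub_nonneg.2 (Esymm_three_le_Esymm_one_mul_Esymm_two x hE1 hE2)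
  positivity
end
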